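/- Let d ≥ 1 and X = [0,1]^{4d}. There do not exist functions g₁, g₂ : ℝ^{4d−1} → ℝ such that for all x ∈ X, |g₁(x₁,…,x_{4d−1}) + g₂(x₂,…,x_{4d}) − x₁·x_{4d}| ≤ 1/8. -/

import Mathlib

/-!
On points whose middle coordinates vanish, `g₁` sees only `x₀ = a` and `g₂` only
`x_{4d-1} = b`, so the approximant becomes `p a + q b`. The mixed second difference of
`p a + q b` over the corners of `[0,1]²` is `0`, while that of `a * b` is `1`; hence one of
the four corner errors is at least `1/4 > 1/8`.
-/

open Set

theorem abs_sub_mul_sub_le_of_separable_approx {s t : Set ℝ} {p q : ℝ → ℝ} {ε : ℝ}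
    (h : ∀ x ∈ s, ∀ y ∈ t, |p x + q y - x * y| ≤ ε)
    {a a' b b' : ℝ} (ha : a ∈ s) (ha' : a' ∈ s) (hb : b ∈ t) (hb' : b' ∈ t) :
    |(a - a') * (b - b')| ≤ 4 * ε := by
  have hab := h a ha b hb
  have hab' := h a ha b' hb'
  have ha'b := h a' ha' b hb
  have ha'b' := h a' ha' b' hb'
  calc |(a - a') * (b - b')|
      = |(p a + q b' - a * b') + (p a' + q b - a' * b)
          - ((p a + q b - a * b) + (p a' + q b' - a' * b'))| := by congr 1; ring
    _ ≤ (|p a + q b' - a * b'| + |p a' + q b - a' * b|)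
          + (|p a + q b - a * b| + |p a' + q b' - a' * b'|) :=
      (abs_sub _ _).trans (add_le_add (abs_add_le _ _) (abs_add_le _ _))
    _ ≤ (ε + ε) + (ε + ε) := by gcongr
    _ = 4 * ε := by ring

theorem exists_separable_approx_of_overlapping {n : ℕ} (hn : 2 ≤ n)
    (g₁ g₂ : (Fin (n - 1) → ℝ) → ℝ) {ε : ℝ}
    (h : ∀ x : Fin n → ℝ, (∀ i, x i ∈ Icc (0 : ℝ) 1) →
      |g₁ (fun i => x ⟨i.1, by have := i.isLt; omega⟩)
        + g₂ (fun i => x ⟨i.1 + 1, by have := i.isLt; omega⟩)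
        - x ⟨0, by omega⟩ * x ⟨n - 1, by omega⟩| ≤ ε) :
    ∃ p q : ℝ → ℝ, ∀ a ∈ Icc (0 : ℝ) 1, ∀ b ∈ Icc (0 : ℝ) 1, |p a + q b - a * b| ≤ ε := by
  refine ⟨fun a => g₁ fun i => if i.1 = 0 then a else 0,
    fun b => g₂ fun i => if i.1 + 1 = n - 1 then b else 0, fun a ha b hb => ?_⟩
  let x : Fin n → ℝ := fun i => if i.1 = 0 then a else if i.1 = n - 1 then b else 0
  have hx : ∀ i, x i ∈ Icc (0 : ℝ) 1 := by
    intro i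
    simp only [x]
    split_ifs
    exacts [ha, hb, ⟨le_rfl, zero_le_one⟩]
  convert h x hx using 4
  · refine congrArg g₁ (funext fun i => ?_)
    simp only [x, if_neg i.isLt.ne]
  · refine congrArg g₂ (funext fun i => ?_)
    simp only [x, Nat.add_one_ne_zero, if_false]
  · simp [x]
  · simp [x, show n - 1 ≠ 0 by omega]

/-- No sum of a function of the first `4d−1` coordinates and a function of the last
`4d−1` coordinates can uniformly approximate `h*(x) = x₁ · x_{4d}` on `[0,1]^{4d}`
within `1/8`. -/
theorem no_overlapping_separable_approx (d : ℕ) (hd : 1 ≤ d) :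
    ¬ ∃ (g₁ g₂ : (Fin (4 * d - 1) → ℝ) → ℝ),
      ∀ x : Fin (4 * d) → ℝ, (∀ i, x i ∈ Set.Icc (0 : ℝ) 1) →
        |g₁ (fun i => x ⟨i.1, by have := i.isLt; omega⟩)
          + g₂ (fun i => x ⟨i.1 + 1, by have := i.isLt; omega⟩)
          - x ⟨0, by omega⟩ * x ⟨4 * d - 1, by omega⟩| ≤ 1 / 8 := by
  rintro ⟨g₁, g₂, h⟩
  obtain ⟨p, q, hpq⟩ := exists_separable_approx_of_overlapping (by omega) g₁ g₂ h
  have hcorners := abs_sub_mul_sub_le_of_separable_approx hpq (right_mem_Icc.2 zero_le_one)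
    (left_mem_Icc.2 zero_le_one) (right_mem_Icc.2 zero_le_one) (left_mem_Icc.2 zero_le_one)
  norm_num at hcorners
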